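/- arXiv:1301.7094 — 4 statements merged into one kernel-verified Lean document; each statement's English description precedes it below -/
import Mathlib

section
/- Let A be an n×n integer matrix and suppose a monic polynomial p ∈ ℤ[x] of degree d with odd constant coefficient divides the characteristic polynomial of A. Then for every natural number k, the rank over 𝔽₂ of (A mod 2)^k is at least d. -/
/-! Over a field, the kernel of `M ^ k` lies in the generalized `0`-eigenspace of `M`, whose
dimension is the multiplicity of `0` as a root of the characteristic polynomial. A divisor of
the characteristic polynomial with nonzero constant term caps that multiplicity at
`n - deg P`. Reducing mod 2 keeps `p` monic of degree `d`, with odd constant term becoming `1`. -/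

open Polynomial Module

theorem Polynomial.natTrailingDegree_add_natDegree_le_of_dvd {R : Type*} [Semiring R]
    [NoZeroDivisors R] {f P : R[X]} (hf : f ≠ 0) (hP : P.coeff 0 ≠ 0) (h : P ∣ f) :
    f.natTrailingDegree + P.natDegree ≤ f.natDegree := by
  obtain ⟨Q, rfl⟩ := h
  have hQ : Q ≠ 0 := right_ne_zero_of_mul hf
  have hP₀ : P ≠ 0 := left_ne_zero_of_mul hf
  rw [natTrailingDegree_mul hP₀ hQ, natDegree_mul hP₀ hQ,
    natTrailingDegree_eq_zero.mpr (Or.inr hP)]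
  have := Q.natTrailingDegree_le_natDegree
  omega

theorem Matrix.card_le_rank_pow_add_natTrailingDegree_charpoly {K ι : Type*} [Field K]
    [Fintype ι] [DecidableEq ι] (M : Matrix ι ι K) (k : ℕ) :
    Fintype.card ι ≤ (M ^ k).rank + M.charpoly.natTrailingDegree := by
  let φ : Module.End K (ι → K) := M.toLin'
  have hker : LinearMap.ker (φ ^ k) ≤ φ.maxGenEigenspace 0 := fun x hx =>
    (Module.End.mem_maxGenEigenspace _ _ _).mpr ⟨k, by simpa using hx⟩
  have hnullity := LinearMap.finrank_range_add_finrank_ker (φ ^ k)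
  rw [finrank_fintype_fun_eq_card] at hnullity
  have hker_dim := Submodule.finrank_mono hker
  rw [LinearMap.finrank_maxGenEigenspace_zero_eq, Matrix.charpoly_toLin'] at hker_dim
  have hrank : (M ^ k).rank = finrank K (LinearMap.range (φ ^ k)) := by
    rw [Matrix.rank, ← Matrix.toLin'_apply', Matrix.toLin'_pow]
  omega

theorem Matrix.natDegree_le_rank_pow_of_dvd_charpoly {K ι : Type*} [Field K]
    [Fintype ι] [DecidableEq ι] (M : Matrix ι ι K) {P : K[X]} (hP : P.coeff 0 ≠ 0)
    (h : P ∣ M.charpoly) (k : ℕ) : P.natDegree ≤ (M ^ k).rank := by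
  have hroot_mult := natTrailingDegree_add_natDegree_le_of_dvd M.charpoly_monic.ne_zero hP h
  have hkernel := M.card_le_rank_pow_add_natTrailingDegree_charpoly k
  rw [M.charpoly_natDegree_eq_dim] at hroot_mult
  omega

theorem rank_mod_two_pow_ge_of_odd_constant_divisor
    (n : ℕ) (A : Matrix (Fin n) (Fin n) ℤ) (p : Polynomial ℤ) (d : ℕ)
    (hmonic : p.Monic) (hdeg : p.natDegree = d) (hodd : Odd (p.coeff 0))
    (hdvd : p ∣ A.charpoly) :
    ∀ k : ℕ, d ≤ ((A.map (Int.cast : ℤ → ZMod 2)) ^ k).rank := by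
  intro k
  let c := Int.castRingHom (ZMod 2)
  have hcoeff : (p.map c).coeff 0 ≠ 0 := by
    rwa [coeff_map, eq_intCast, Ne, ZMod.intCast_eq_zero_iff_even, Int.not_even_iff_odd]
  have hdvd₂ : p.map c ∣ (A.map c).charpoly := A.charpoly_map c ▸ map_dvd c hdvd
  rw [← hdeg, ← hmonic.natDegree_map c]
  exact (A.map c).natDegree_le_rank_pow_of_dvd_charpoly hcoeff hdvd₂ k
end

section
/- Let X and Y be m×m integer matrices and set M = [[X, Y], [Y, X]]. Suppose a monic polynomial p ∈ ℤ[x] of degree d with odd constant coefficient divides the characteristic polynomial of X+Y. Then for every natural number k, rank(M^k) over ℚ is at least 2d. In particular, the eventual rank of M (the rank of M^{2m}) is at least 2d. -/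
/-!
Conjugating `M = [[X, Y], [Y, X]]` by the unipotent matrix `[[1, 0], [1, 1]]` makes it block
triangular with diagonal blocks `X - Y` and `X + Y`, so `χ_M = χ_{X-Y} χ_{X+Y}`. As
`X - Y ≡ X + Y` mod 2, the square of `p` divides `χ_M` over `𝔽₂`, and `p(0) ≠ 0` there, so `0` is a
root of `χ_M` mod 2, and a fortiori over `ℚ`, of multiplicity at most `2m - 2d`. That
multiplicity is the dimension of the generalized `0`-eigenspace, which contains the kernel of
every power `M ^ k`.
-/

open Polynomial

namespace Polynomial

theorem natTrailingDegree_add_natDegree_le_of_dvd_s6 {R : Type*} [CommRing R] [IsDomain R]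
    {p q : R[X]} (hdvd : p ∣ q) (hp : p.coeff 0 ≠ 0) (hq : q ≠ 0) :
    q.natTrailingDegree + p.natDegree ≤ q.natDegree := by
  obtain ⟨r, rfl⟩ := hdvd
  have hp0 : p ≠ 0 := left_ne_zero_of_mul hq
  have hr : r ≠ 0 := right_ne_zero_of_mul hq
  rw [natTrailingDegree_mul hp0 hr, natDegree_mul hp0 hr,
    natTrailingDegree_eq_zero.mpr (Or.inr hp)]
  have := r.natTrailingDegree_le_natDegree
  omega

theorem natTrailingDegree_map_le_natTrailingDegree_map {R S T : Type*} [Semiring R] [Semiring S]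
    [Semiring T] {p : R[X]} (f : R →+* S) {g : R →+* T} (hg : Function.Injective g)
    (hf : p.map f ≠ 0) : (p.map g).natTrailingDegree ≤ (p.map f).natTrailingDegree := by
  refine natTrailingDegree_le_of_ne_zero fun h => ?_
  rw [coeff_map, map_eq_zero_iff g hg] at h
  exact trailingCoeff_nonzero_iff_nonzero.mpr hf (by rw [trailingCoeff, coeff_map, h, map_zero])

end Polynomial

namespace Matrix

variable {n : Type*} [Fintype n] [DecidableEq n]

theorem charpoly_fromBlocks_self {R : Type*} [CommRing R] (A B : Matrix n n R) :
    (fromBlocks A B B A).charpoly = (A - B).charpoly * (A + B).charpoly := by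
  have hconj : fromBlocks 1 0 1 1 * fromBlocks A B B A * fromBlocks 1 0 (-1) 1
      = fromBlocks (A - B) B 0 (A + B) := by
    simp only [fromBlocks_multiply, Matrix.one_mul, Matrix.mul_one, Matrix.zero_mul,
      Matrix.mul_zero, Matrix.mul_neg, add_zero, zero_add]
    congr 1 <;> abel
  have hinv : fromBlocks 1 0 (-1) 1 * fromBlocks 1 0 1 1 = (1 : Matrix (n ⊕ n) (n ⊕ n) R) := by
    simp [fromBlocks_multiply]
  rw [← charpoly_fromBlocks_zero₂₁, ← hconj, mul_assoc, charpoly_mul_comm, mul_assoc, hinv,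
    mul_one]

theorem card_sub_natTrailingDegree_charpoly_le_rank_pow {K : Type*} [Field K]
    (A : Matrix n n K) (k : ℕ) :
    Fintype.card n - A.charpoly.natTrailingDegree ≤ (A ^ k).rank := by
  have hker : LinearMap.ker (A.toLin' ^ k) ≤ Module.End.maxGenEigenspace A.toLin' 0 :=
    fun x hx => (Module.End.mem_maxGenEigenspace _ _ _).mpr ⟨k, by simpa using hx⟩
  have hker_le :
      Module.finrank K (LinearMap.ker (A.toLin' ^ k)) ≤ A.charpoly.natTrailingDegree := by
    rw [← charpoly_toLin', ← LinearMap.finrank_maxGenEigenspace_zero_eq]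
    exact Submodule.finrank_mono hker
  have := LinearMap.finrank_range_add_finrank_ker (A.toLin' ^ k)
  rw [rank, ← toLin'_apply', toLin'_pow]
  simp only [Module.finrank_fintype_fun_eq_card] at this
  omega

theorem natDegree_le_rank_pow_of_dvd_charpoly_map {S : Type*} [CommRing S] [IsDomain S]
    (f : ℤ →+* S) (C : Matrix n n ℤ) {q : ℤ[X]} (hq : q.Monic) (hq0 : f (q.coeff 0) ≠ 0)
    (hdvd : q.map f ∣ C.charpoly.map f) (k : ℕ) :
    q.natDegree ≤ ((C.map (Int.cast : ℤ → ℚ)) ^ k).rank := by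
  have hc : C.charpoly.map f ≠ 0 := (C.charpoly_monic.map f).ne_zero
  have hdeg := natTrailingDegree_add_natDegree_le_of_dvd_s6 hdvd (by rwa [coeff_map]) hc
  rw [hq.natDegree_map, C.charpoly_monic.natDegree_map, charpoly_natDegree_eq_dim] at hdeg
  have htrail : (C.map (Int.cast : ℤ → ℚ)).charpoly.natTrailingDegree
      ≤ (C.charpoly.map f).natTrailingDegree := by
    rw [show (Int.cast : ℤ → ℚ) = Int.castRingHom ℚ from rfl, charpoly_map]
    exact natTrailingDegree_map_le_natTrailingDegree_map f (RingHom.injective_int _) hc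
  have := card_sub_natTrailingDegree_charpoly_le_rank_pow (C.map (Int.cast : ℤ → ℚ)) k
  omega

end Matrix

theorem block_matrix_eventual_rank_ge_two_d
    (m : ℕ) (X Y : Matrix (Fin m) (Fin m) ℤ) (p : Polynomial ℤ) (d : ℕ)
    (hmonic : p.Monic) (hdeg : p.natDegree = d) (hodd : Odd (p.coeff 0))
    (hdvd : p ∣ (X + Y).charpoly) :
    (∀ k : ℕ, 2 * d ≤ (((Matrix.fromBlocks X Y Y X).map (Int.cast : ℤ → ℚ)) ^ k).rank) ∧
      2 * d ≤ (((Matrix.fromBlocks X Y Y X).map (Int.cast : ℤ → ℚ)) ^ (2 * m)).rank := by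
  set f := Int.castRingHom (ZMod 2)
  have hsub_eq_add : (X - Y).map f = (X + Y).map f := by
    ext i j
    simp only [Matrix.map_apply, Matrix.sub_apply, Matrix.add_apply, map_sub, map_add,
      CharTwo.sub_eq_add]
  have hdvd_sq : (p * p).map f ∣ (Matrix.fromBlocks X Y Y X).charpoly.map f := by
    rw [Matrix.charpoly_fromBlocks_self, Polynomial.map_mul, Polynomial.map_mul,
      ← Matrix.charpoly_map, hsub_eq_add, Matrix.charpoly_map]
    exact mul_dvd_mul (map_dvd f hdvd) (map_dvd f hdvd)
  have hodd_sq : f ((p * p).coeff 0) ≠ 0 := by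
    rw [mul_coeff_zero, eq_intCast, (hodd.mul hodd).intCast_zmod_two]
    exact one_ne_zero
  have hrank (k : ℕ) := Matrix.natDegree_le_rank_pow_of_dvd_charpoly_map f _
    (hmonic.mul hmonic) hodd_sq hdvd_sq k
  rw [hmonic.natDegree_mul hmonic, hdeg, ← two_mul] at hrank
  exact ⟨hrank, hrank _⟩
end

section
/- Let X be a compact metric space and R ⊆ X × X a relation that is topologically closed, reflexive, and symmetric. Suppose there exists B ∈ ℕ such that every R-chain x₁ R x₂ R ⋯ R x_n satisfies #{x₁,…,x_n} ≤ B. Then the transitive closure of R is a closed equivalence relation on X. -/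
/-!
Chains of `R` are relation series of the closed set `r = {(x, y) | R x y}`. A chain that visits a
point twice can be shortened by cutting out the loop between the two visits, so a shortest chain
is injective and, by the hypothesis on `B`, has fewer than `B` steps. Hence the transitive closure
is the union of the finitely many relations "joined by a chain of exactly `n` steps", `n < B`, and
each of these is closed: it is the image under `f ↦ (f 0, f n)` of the closed, hence compact, set
of chains in the compact space `X ^ (n + 1)`.
-/

open Relation
open scoped SetRel

namespace RelSeries

variable {X : Type*} {r : SetRel X X}

theorem reflTransGen_iff_exists {x y : X} :
    ReflTransGen (· ~[r] ·) x y ↔ ∃ p : RelSeries r, p.head = x ∧ p.last = y := by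
  constructor
  · intro h
    induction h with
    | refl => exact ⟨singleton r x, rfl, rfl⟩
    | tail _ hyz ih =>
      obtain ⟨p, rfl, rfl⟩ := ih
      exact ⟨p.snoc _ hyz, head_snoc .., last_snoc ..⟩
  · rintro ⟨p, rfl, rfl⟩
    induction p using RelSeries.inductionOn' with
    | singleton x => exact .refl
    | snoc p x hx ih => simpa using ih.tail hx

theorem exists_length_lt_of_apply_eq (p : RelSeries r) {i j : Fin (p.length + 1)} (hij : i < j)
    (h : p i = p j) :
    ∃ q : RelSeries r, q.head = p.head ∧ q.last = p.last ∧ q.length < p.length :=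
  ⟨(p.take i).smash (p.drop j) (by simpa using h), by simp, by simp, by simp; omega⟩

theorem exists_injective_of_head_last (p : RelSeries r) :
    ∃ q : RelSeries r, q.head = p.head ∧ q.last = p.last ∧ Function.Injective q := by
  induction hn : p.length using Nat.strong_induction_on generalizing p with
  | _ n ih =>
  by_cases hinj : Function.Injective p
  · exact ⟨p, rfl, rfl, hinj⟩
  obtain ⟨i, j, hij, hne⟩ := Function.not_injective_iff.mp hinj
  obtain ⟨q, hqh, hql, hqlen⟩ :
      ∃ q : RelSeries r, q.head = p.head ∧ q.last = p.last ∧ q.length < p.length := by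
    rcases hne.lt_or_gt with hlt | hlt
    · exact p.exists_length_lt_of_apply_eq hlt hij
    · exact p.exists_length_lt_of_apply_eq hlt hij.symm
  obtain ⟨s, hsh, hsl, hs⟩ := ih _ (hn ▸ hqlen) q rfl
  exact ⟨s, hsh.trans hqh, hsl.trans hql, hs⟩

end RelSeries

theorem isClosed_setOf_exists_relSeries_length_eq {X : Type*} [TopologicalSpace X]
    [CompactSpace X] [T2Space X] {r : SetRel X X} (hr : IsClosed r) (n : ℕ) :
    IsClosed {q : X × X | ∃ p : RelSeries r, p.length = n ∧ p.head = q.1 ∧ p.last = q.2} := by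
  have hchains : IsClosed {f : Fin (n + 1) → X | ∀ i : Fin n, (f i.castSucc, f i.succ) ∈ r} := by
    simp only [Set.ofPred_forall]
    exact isClosed_iInter fun i => hr.preimage (by fun_prop)
  convert (hchains.isCompact.image (f := fun f => (f 0, f (Fin.last n))) (by fun_prop)).isClosed
    using 1
  ext ⟨x, y⟩
  constructor
  · rintro ⟨⟨_, f, hf⟩, rfl, rfl, rfl⟩
    exact ⟨f, hf, rfl⟩
  · rintro ⟨f, hf, hxy⟩
    exact ⟨⟨n, f, hf⟩, rfl, congr_arg Prod.fst hxy, congr_arg Prod.snd hxy⟩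

theorem transGen_iff_exists_relSeries_length_lt {X : Type*} {R : X → X → Prop}
    (hrefl : ∀ x, R x x) {B : ℕ}
    (hB : ∀ (n : ℕ) (x : Fin (n + 1) → X),
      (∀ i : Fin n, R (x i.castSucc) (x i.succ)) → (Set.range x).ncard ≤ B) {x y : X} :
    TransGen R x y ↔
      ∃ p : RelSeries {q : X × X | R q.1 q.2}, p.length < B ∧ p.head = x ∧ p.last = y := by
  constructor
  · intro h
    obtain ⟨p, rfl, rfl⟩ :=
      (RelSeries.reflTransGen_iff_exists (r := {q : X × X | R q.1 q.2})).mp h.to_reflTransGen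
    obtain ⟨q, hqh, hql, hq⟩ := p.exists_injective_of_head_last
    have hcard := hB q.length q q.step
    rw [Set.ncard_range_of_injective hq, Nat.card_eq_fintype_card, Fintype.card_fin] at hcard
    exact ⟨q, by omega, hqh, hql⟩
  · rintro ⟨p, -, rfl, rfl⟩
    obtain h | h := reflTransGen_iff_eq_or_transGen.mp
      (RelSeries.reflTransGen_iff_exists.mpr ⟨p, rfl, rfl⟩)
    · exact h ▸ .single (hrefl _)
    · exact h

theorem transitive_closure_closed_equivalence
    (X : Type*) [MetricSpace X] [CompactSpace X]
    (R : X → X → Prop)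
    (hclosed : IsClosed {p : X × X | R p.1 p.2})
    (hrefl : ∀ x, R x x) (hsymm : ∀ x y, R x y → R y x)
    (B : ℕ)
    (hB : ∀ (n : ℕ) (x : Fin (n + 1) → X),
      (∀ i : Fin n, R (x i.castSucc) (x i.succ)) → (Set.range x).ncard ≤ B) :
    Equivalence (Relation.TransGen R) ∧
      IsClosed {p : X × X | Relation.TransGen R p.1 p.2} := by
  have : Std.Symm R := ⟨hsymm⟩
  refine ⟨⟨fun x => .single (hrefl x), Std.Symm.symm _ _, .trans⟩, ?_⟩
  have hunion : {p : X × X | TransGen R p.1 p.2} = ⋃ n < B, {q : X × X |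
      ∃ p : RelSeries {q : X × X | R q.1 q.2}, p.length = n ∧ p.head = q.1 ∧ p.last = q.2} := by
    ext ⟨x, y⟩
    simp [transGen_iff_exists_relSeries_length_lt hrefl hB]
  rw [hunion]
  exact (Set.finite_Iio B).isClosed_biUnion fun n _ =>
    isClosed_setOf_exists_relSeries_length_eq hclosed n
end

section
/- Let f : X → Y be a continuous surjection between compact metric spaces, and suppose there is δ > 0 such that every fiber f⁻¹(y) consists of exactly two points at distance at least δ from each other. Then f is a 2-to-1 covering map: every point of Y has an open neighborhood U such that f⁻¹(U) is a disjoint union of two open sets each mapped homeomorphically onto U by f. -/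
/-!
Around a fibre `{x₁, x₂}` take the disjoint balls `Bᵢ` of radius `δ / 2` and let `U` be the set of
points whose whole fibre lies in `B₁ ∪ B₂`; `U` is open because a continuous map out of a compact
space is closed. Two points of one fibre are `δ` apart, so no fibre meets a ball twice, and every
fibre over `U` has exactly one point in each ball. Hence `f` maps each sheet `Vᵢ = Bᵢ ∩ f⁻¹ U`
bijectively onto `U`, and it does so openly: for `W` open in `V₁`,
`f '' W = U ∩ kernImage f (W ∪ V₂)`, again open by closedness of `f`.
-/

open Set Metric

section Sheets

variable {X Y : Type*} [TopologicalSpace X] [TopologicalSpace Y] {f : X → Y} {U : Set Y}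
  {V₁ V₂ : Set X}

theorem IsClosedMap.isOpen_image_of_bijOn (hcl : IsClosedMap f) (hU : IsOpen U)
    (hV₂ : IsOpen V₂) (hdisj : Disjoint V₁ V₂) (hpre : f ⁻¹' U ⊆ V₁ ∪ V₂) (hbij : BijOn f V₁ U)
    {W : Set X} (hW : IsOpen W) (hWV : W ⊆ V₁) : IsOpen (f '' W) := by
  suffices f '' W = U ∩ kernImage f (W ∪ V₂) by
    rw [this]
    exact hU.inter (isClosedMap_iff_kernImage.mp hcl (hW.union hV₂))
  ext y
  constructor
  · rintro ⟨x, hxW, rfl⟩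
    refine ⟨hbij.mapsTo (hWV hxW), fun x' hx' => ?_⟩
    rcases hpre (show f x' ∈ U from hx' ▸ hbij.mapsTo (hWV hxW)) with hx'V₁ | hx'V₂
    · exact .inl (hbij.injOn hx'V₁ (hWV hxW) hx' ▸ hxW)
    · exact .inr hx'V₂
  · rintro ⟨hyU, hyW⟩
    obtain ⟨x, hxV₁, rfl⟩ := hbij.surjOn hyU
    exact ⟨x, (hyW rfl).resolve_right (hdisj.notMem_of_mem_left hxV₁), rfl⟩

theorem exists_homeomorph_of_bijOn (hf : Continuous f) (hcl : IsClosedMap f) (hU : IsOpen U)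
    (hV₁ : IsOpen V₁) (hV₂ : IsOpen V₂) (hdisj : Disjoint V₁ V₂) (hpre : f ⁻¹' U ⊆ V₁ ∪ V₂)
    (hbij : BijOn f V₁ U) : ∃ e : V₁ ≃ₜ U, ∀ x : V₁, (e x : Y) = f x := by
  have hcont : Continuous (hbij.equiv f) := (hf.comp continuous_subtype_val).subtype_mk _
  have hopen : IsOpenMap (hbij.equiv f) := by
    rw [hU.isOpenEmbedding_subtypeVal.isOpenMap_iff]
    intro s hs
    rw [show Subtype.val ∘ hbij.equiv f = f ∘ Subtype.val from rfl, image_comp]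
    exact hcl.isOpen_image_of_bijOn hU hV₂ hdisj hpre hbij (hV₁.isOpenMap_subtype_val s hs)
      (Subtype.coe_image_subset V₁ s)
  exact ⟨(hbij.equiv f).toHomeomorphOfContinuousOpen hcont hopen, fun _ => rfl⟩

end Sheets

section BallSheets

variable {X Y : Type*} [MetricSpace X] {f : X → Y} {δ : ℝ}

theorem notMem_ball_half_of_le_dist {a b c : X} (hab : δ ≤ dist a b) (ha : a ∈ ball c (δ / 2)) :
    b ∉ ball c (δ / 2) := fun hb => by
  have := dist_triangle_right a b c
  rw [mem_ball] at ha hb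
  linarith

theorem le_dist_of_eq_of_ne (hfib : ∀ y, ∃ a b : X, δ ≤ dist a b ∧ f ⁻¹' {y} = {a, b})
    {x x' : X} (h : f x = f x') (hne : x ≠ x') : δ ≤ dist x x' := by
  obtain ⟨a, b, hab, hfab⟩ := hfib (f x)
  have hx : x ∈ ({a, b} : Set X) := hfab ▸ rfl
  have hx' : x' ∈ ({a, b} : Set X) := hfab ▸ h.symm
  rcases hx with rfl | rfl <;> rcases hx' with rfl | rfl
  exacts [absurd rfl hne, hab, dist_comm x x' ▸ hab, absurd rfl hne]

theorem bijOn_ball_inter_preimage_kernImage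
    (hfib : ∀ y, ∃ a b : X, δ ≤ dist a b ∧ f ⁻¹' {y} = {a, b}) (c c' : X) :
    BijOn f (ball c (δ / 2) ∩ f ⁻¹' kernImage f (ball c (δ / 2) ∪ ball c' (δ / 2)))
      (kernImage f (ball c (δ / 2) ∪ ball c' (δ / 2))) := by
  refine ⟨fun x hx => hx.2, fun x hx x' hx' h => ?_, fun y hy => ?_⟩
  · by_contra hne
    exact notMem_ball_half_of_le_dist (le_dist_of_eq_of_ne hfib h hne) hx.1 hx'.1
  · obtain ⟨a, b, hab, hfab⟩ := hfib y
    have ha : f a = y := show a ∈ f ⁻¹' {y} from hfab ▸ .inl rfl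
    have hb : f b = y := show b ∈ f ⁻¹' {y} from hfab ▸ .inr rfl
    have hpre : f ⁻¹' {y} ⊆ f ⁻¹' kernImage f (ball c (δ / 2) ∪ ball c' (δ / 2)) :=
      preimage_mono (singleton_subset_iff.mpr hy)
    by_cases hac : a ∈ ball c (δ / 2)
    · exact ⟨a, ⟨hac, hpre ha⟩, ha⟩
    · have hac' : a ∈ ball c' (δ / 2) := (hy ha).resolve_left hac
      have hbc : b ∈ ball c (δ / 2) :=
        (hy hb).resolve_right (notMem_ball_half_of_le_dist hab hac')
      exact ⟨b, ⟨hbc, hpre hb⟩, hb⟩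

end BallSheets

theorem two_to_one_separated_fibers_covering_general
    (X Y : Type*) [MetricSpace X] [CompactSpace X] [MetricSpace Y]
    (f : X → Y) (hf : Continuous f)
    (δ : ℝ) (hδ : 0 < δ)
    (hfib : ∀ y : Y, ∃ x₁ x₂ : X, x₁ ≠ x₂ ∧ δ ≤ dist x₁ x₂ ∧ f ⁻¹' {y} = {x₁, x₂}) :
    ∀ y : Y, ∃ U : Set Y, IsOpen U ∧ y ∈ U ∧
      ∃ V₁ V₂ : Set X, IsOpen V₁ ∧ IsOpen V₂ ∧ Disjoint V₁ V₂ ∧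
        f ⁻¹' U = V₁ ∪ V₂ ∧
        (∃ e : V₁ ≃ₜ U, ∀ x : V₁, (e x : Y) = f x) ∧
        (∃ e : V₂ ≃ₜ U, ∀ x : V₂, (e x : Y) = f x) := by
  intro y
  have hfib' : ∀ y, ∃ a b : X, δ ≤ dist a b ∧ f ⁻¹' {y} = {a, b} := fun y =>
    let ⟨a, b, _, hab, hfab⟩ := hfib y
    ⟨a, b, hab, hfab⟩
  obtain ⟨x₁, x₂, -, hdist, hfy⟩ := hfib y
  set B₁ := ball x₁ (δ / 2)
  set B₂ := ball x₂ (δ / 2)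
  set U := kernImage f (B₁ ∪ B₂)
  have hcl : IsClosedMap f := hf.isClosedMap
  have hU : IsOpen U := isClosedMap_iff_kernImage.mp hcl (isOpen_ball.union isOpen_ball)
  have hyU : y ∈ U := fun x hx => by
    rcases (show x ∈ ({x₁, x₂} : Set X) from hfy ▸ hx) with rfl | rfl
    exacts [.inl (mem_ball_self (half_pos hδ)), .inr (mem_ball_self (half_pos hδ))]
  have hpre : f ⁻¹' U = B₁ ∩ f ⁻¹' U ∪ B₂ ∩ f ⁻¹' U := by
    rw [← union_inter_distrib_right, inter_eq_right.mpr (subset_kernImage_iff.mp subset_rfl)]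
  have hdisj : Disjoint (B₁ ∩ f ⁻¹' U) (B₂ ∩ f ⁻¹' U) :=
    (ball_disjoint_ball (by linarith)).mono inter_subset_left inter_subset_left
  have hV₁ : IsOpen (B₁ ∩ f ⁻¹' U) := isOpen_ball.inter (hU.preimage hf)
  have hV₂ : IsOpen (B₂ ∩ f ⁻¹' U) := isOpen_ball.inter (hU.preimage hf)
  have hbij₁ : BijOn f (B₁ ∩ f ⁻¹' U) U := bijOn_ball_inter_preimage_kernImage hfib' x₁ x₂
  have hbij₂ : BijOn f (B₂ ∩ f ⁻¹' U) U := by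
    rw [show U = kernImage f (B₂ ∪ B₁) by rw [union_comm]]
    exact bijOn_ball_inter_preimage_kernImage hfib' x₂ x₁
  exact ⟨U, hU, hyU, _, _, hV₁, hV₂, hdisj, hpre,
    exists_homeomorph_of_bijOn hf hcl hU hV₁ hV₂ hdisj hpre.subset hbij₁,
    exists_homeomorph_of_bijOn hf hcl hU hV₂ hV₁ hdisj.symm
      (hpre.subset.trans (union_comm _ _).subset) hbij₂⟩

theorem two_to_one_separated_fibers_covering
    (X Y : Type*) [MetricSpace X] [CompactSpace X] [MetricSpace Y] [CompactSpace Y]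
    (f : X → Y) (hf : Continuous f) (hsurj : Function.Surjective f)
    (δ : ℝ) (hδ : 0 < δ)
    (hfib : ∀ y : Y, ∃ x₁ x₂ : X, x₁ ≠ x₂ ∧ δ ≤ dist x₁ x₂ ∧ f ⁻¹' {y} = {x₁, x₂}) :
    ∀ y : Y, ∃ U : Set Y, IsOpen U ∧ y ∈ U ∧
      ∃ V₁ V₂ : Set X, IsOpen V₁ ∧ IsOpen V₂ ∧ Disjoint V₁ V₂ ∧
        f ⁻¹' U = V₁ ∪ V₂ ∧
        (∃ e : V₁ ≃ₜ U, ∀ x : V₁, (e x : Y) = f x) ∧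
        (∃ e : V₂ ≃ₜ U, ∀ x : V₂, (e x : Y) = f x) :=
  two_to_one_separated_fibers_covering_general X Y f hf δ hδ hfib
end
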